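/- arXiv:2012.04345 — 4 statements merged into one kernel-verified Lean document; each statement's English description precedes it below -/
import Mathlib

section
/- Let D ∈ ℝ^{m×k d̂} have blocks D^{(1)},…,D^{(k)} ∈ ℝ^{m×d̂}, let l ∈ [k], and suppose that for every j ≠ l and every nonzero vector u ∈ ℝ^{d̂}, the minimum-Euclidean-norm minimizer α of ‖D^{(l)}α − D^{(j)}u‖ satisfies ‖α‖ < ‖u‖ (i.e. ‖D^{(l)†}D^{(j)}‖_2 < 1 in terms of the Moore–Penrose pseudoinverse). Suppose x = Σ_{j=1}^k D^{(j)} c^{(j)} for vectors c^{(j)} ∈ ℝ^{d̂}, and that x lies in the column space of D^{(l)}. Then there exists α ∈ ℝ^{d̂} with D^{(l)}α = x and ‖α‖ ≤ Σ_{j=1}^k ‖c^{(j)}‖; moreover, if c^{(j)} ≠ 0 for some j ≠ l, one can choose α with ‖α‖ < Σ_{j=1}^k ‖c^{(j)}‖. -/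
open Matrix Finset

noncomputable def vnorm {p : ℕ} (v : Fin p → ℝ) : ℝ := Real.sqrt (∑ i, v i ^ 2)

/-- `α` is a minimum-Euclidean-norm minimizer of `β ↦ ‖Aβ − b‖`. -/
def IsMinNormSol {m p : ℕ} (A : Matrix (Fin m) (Fin p) ℝ) (b : Fin m → ℝ)
    (α : Fin p → ℝ) : Prop :=
  (∀ β, vnorm (A.mulVec α - b) ≤ vnorm (A.mulVec β - b)) ∧
  (∀ β, (∀ γ, vnorm (A.mulVec β - b) ≤ vnorm (A.mulVec γ - b)) → vnorm α ≤ vnorm β)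

/-! For `j ≠ l` replace `c j` by a minimum-norm least-squares solution `g j` of `D l g ≈ D j (c j)`,
which is shorter than `c j` (strictly so when `c j ≠ 0`), and keep `g l = c l`. Every `D l (g j)` is
the orthogonal projection of `D j (c j)` onto the column space of `D l`, so by linearity of the
projection `D l (∑ j, g j)` is the projection of `x`, which is `x` itself. The triangle inequality
then bounds `‖∑ j, g j‖` by `∑ j, ‖c j‖`. -/

section LeastSquares

variable {E F : Type*} [NormedAddCommGroup E] [InnerProductSpace ℝ E]
  [NormedAddCommGroup F] [InnerProductSpace ℝ F]

theorem Submodule.norm_sub_sq_eq_of_mem (K : Submodule ℝ F) [K.HasOrthogonalProjection]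
    {v : F} (hv : v ∈ K) (b : F) :
    ‖v - b‖ ^ 2 = ‖v - K.starProjection b‖ ^ 2 + ‖K.starProjection b - b‖ ^ 2 := by
  have h_mem : v - K.starProjection b ∈ K := K.sub_mem hv (K.starProjection_apply_mem b)
  have h_orth : K.starProjection b - b ∈ Kᗮ := by
    simpa using Kᗮ.neg_mem (K.sub_starProjection_mem_orthogonal b)
  rw [← sub_add_sub_cancel v (K.starProjection b) b]
  simpa only [sq] using
    norm_add_sq_eq_norm_sq_add_norm_sq_real (K.inner_right_of_mem_orthogonal h_mem h_orth)

theorem Submodule.norm_sub_le_iff_eq_starProjection (K : Submodule ℝ F)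
    [K.HasOrthogonalProjection] {v : F} (hv : v ∈ K) (b : F) :
    (∀ w ∈ K, ‖v - b‖ ≤ ‖w - b‖) ↔ v = K.starProjection b := by
  have hP := K.starProjection_apply_mem b
  constructor
  · intro h
    have h_sq := pow_le_pow_left₀ (norm_nonneg _) (h _ hP) 2
    rw [K.norm_sub_sq_eq_of_mem hv, K.norm_sub_sq_eq_of_mem hP, sub_self, norm_zero] at h_sq
    have : ‖v - K.starProjection b‖ ^ 2 = 0 := le_antisymm (by linarith) (sq_nonneg _)
    simpa [sub_eq_zero] using this
  · rintro rfl w hw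
    refine le_of_pow_le_pow_left₀ two_ne_zero (norm_nonneg _) ?_
    rw [K.norm_sub_sq_eq_of_mem hw]
    exact le_add_of_nonneg_left (sq_nonneg _)

def IsLeastSquaresSol (T : E →ₗ[ℝ] F) (b : F) (a : E) : Prop :=
  ∀ β, ‖T a - b‖ ≤ ‖T β - b‖

def IsMinNormLeastSquaresSol (T : E →ₗ[ℝ] F) (b : F) (a : E) : Prop :=
  IsLeastSquaresSol T b a ∧ ∀ β, IsLeastSquaresSol T b β → ‖a‖ ≤ ‖β‖

theorem IsLeastSquaresSol.of_apply_eq {T : E →ₗ[ℝ] F} {b : F} {a : E} (h : T a = b) :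
    IsLeastSquaresSol T b a := fun β => by
  rw [h, sub_self, norm_zero]
  exact norm_nonneg _

theorem IsMinNormLeastSquaresSol.norm_le_of_apply_eq {T : E →ₗ[ℝ] F} {b : F} {a β : E}
    (h : IsMinNormLeastSquaresSol T b a) (hβ : T β = b) : ‖a‖ ≤ ‖β‖ :=
  h.2 β (.of_apply_eq hβ)

theorem isLeastSquaresSol_iff (T : E →ₗ[ℝ] F) [(LinearMap.range T).HasOrthogonalProjection]
    (b : F) (a : E) :
    IsLeastSquaresSol T b a ↔ T a = (LinearMap.range T).starProjection b := by
  rw [← (LinearMap.range T).norm_sub_le_iff_eq_starProjection (LinearMap.mem_range_self T a)]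
  simp [IsLeastSquaresSol]

theorem IsLeastSquaresSol.apply_sum_eq {ι : Type*} [Fintype ι] {T : E →ₗ[ℝ] F}
    [(LinearMap.range T).HasOrthogonalProjection] {b : ι → F} {g : ι → E}
    (hg : ∀ j, IsLeastSquaresSol T (b j) (g j)) (hb : ∑ j, b j ∈ LinearMap.range T) :
    T (∑ j, g j) = ∑ j, b j := by
  simp only [isLeastSquaresSol_iff] at hg
  rw [map_sum, Finset.sum_congr rfl fun j _ => hg j, ← map_sum,
    Submodule.starProjection_eq_self_iff.mpr hb]

theorem exists_isMinNormLeastSquaresSol [FiniteDimensional ℝ E] (T : E →ₗ[ℝ] F) (b : F) :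
    ∃ a, IsMinNormLeastSquaresSol T b a := by
  set S := {β | IsLeastSquaresSol T b β}
  have h_preimage : S = T ⁻¹' {(LinearMap.range T).starProjection b} :=
    Set.ext fun β => isLeastSquaresSol_iff T b β
  have h_closed : IsClosed S :=
    h_preimage ▸ isClosed_singleton.preimage T.continuous_of_finiteDimensional
  have h_nonempty : S.Nonempty := h_preimage ▸ (LinearMap.range T).starProjection_apply_mem b
  obtain ⟨a, ha, h_dist⟩ := h_closed.exists_infDist_eq_dist h_nonempty 0
  refine ⟨a, ha, fun β hβ => ?_⟩
  simpa [h_dist] using Metric.infDist_le_dist_of_mem (x := 0) (show β ∈ S from hβ)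

theorem exists_apply_eq_norm_le_sum_norm {ι : Type*} [FiniteDimensional ℝ E] [Fintype ι]
    (T : ι → E →ₗ[ℝ] F) (l : ι)
    (hT : ∀ j ≠ l, ∀ u ≠ 0, ∀ a, IsMinNormLeastSquaresSol (T l) (T j u) a → ‖a‖ < ‖u‖)
    (c : ι → E) (hx : ∑ j, T j (c j) ∈ LinearMap.range (T l)) :
    ∃ a, T l a = ∑ j, T j (c j) ∧ ‖a‖ ≤ ∑ j, ‖c j‖ ∧
      ((∃ j ≠ l, c j ≠ 0) → ‖a‖ < ∑ j, ‖c j‖) := by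
  classical
  choose g hg using fun j => exists_isMinNormLeastSquaresSol (T l) (T j (c j))
  set g' := Function.update g l (c l)
  have h_lsq : ∀ j, IsLeastSquaresSol (T l) (T j (c j)) (g' j) := by
    intro j
    rcases eq_or_ne j l with rfl | hj
    · exact .of_apply_eq (by simp [g'])
    · simpa [g', hj] using (hg j).1
  have h_lt : ∀ j ≠ l, c j ≠ 0 → ‖g' j‖ < ‖c j‖ := fun j hj hc => by
    simpa [g', hj] using hT j hj (c j) hc (g j) (hg j)
  have h_le : ∀ j, ‖g' j‖ ≤ ‖c j‖ := by
    intro j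
    rcases eq_or_ne j l with rfl | hj
    · simp [g']
    rcases eq_or_ne (c j) 0 with hc | hc
    · simpa [g', hj, hc] using (hg j).norm_le_of_apply_eq (β := 0) (by simp [hc])
    · exact (h_lt j hj hc).le
  refine ⟨∑ j, g' j, IsLeastSquaresSol.apply_sum_eq h_lsq hx,
    (norm_sum_le _ _).trans (Finset.sum_le_sum fun j _ => h_le j), ?_⟩
  rintro ⟨j, hj, hc⟩
  exact (norm_sum_le _ _).trans_lt
    (Finset.sum_lt_sum (fun j _ => h_le j) ⟨j, Finset.mem_univ j, h_lt j hj hc⟩)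

end LeastSquares

theorem vnorm_eq_norm_toLp {p : ℕ} (v : Fin p → ℝ) : vnorm v = ‖WithLp.toLp 2 v‖ := by
  simp [vnorm, EuclideanSpace.norm_eq]

theorem IsMinNormLeastSquaresSol.isMinNormSol {m p : ℕ} {A : Matrix (Fin m) (Fin p) ℝ}
    {b : Fin m → ℝ} {a : EuclideanSpace ℝ (Fin p)}
    (h : IsMinNormLeastSquaresSol (Matrix.toEuclideanLin A) (WithLp.toLp 2 b) a) :
    IsMinNormSol A b (WithLp.ofLp a) := by
  have h_res (β : Fin p → ℝ) :
      vnorm (A *ᵥ β - b) = ‖Matrix.toEuclideanLin A (WithLp.toLp 2 β) - WithLp.toLp 2 b‖ :=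
    vnorm_eq_norm_toLp _
  refine ⟨fun β => ?_, fun β hβ => ?_⟩
  · simpa [h_res] using h.1 (WithLp.toLp 2 β)
  · simpa [vnorm_eq_norm_toLp] using
      h.2 (WithLp.toLp 2 β) fun γ => by simpa [h_res] using hβ (WithLp.ofLp γ)

/-- If `‖D^{(l)†} D^{(j)}‖_2 < 1` for all `j ≠ l` (expressed via minimum-norm solutions),
`x = Σ_j D^{(j)} c^{(j)}` and `x` lies in the column space of `D^{(l)}`, then `x = D^{(l)} α`
for some `α` with `‖α‖ ≤ Σ_j ‖c^{(j)}‖`, strictly if `c^{(j)} ≠ 0` for some `j ≠ l`. -/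
theorem min_norm_representation_in_one_block
    (m k dh : ℕ)
    (D : Fin k → Matrix (Fin m) (Fin dh) ℝ) (l : Fin k)
    (hD : ∀ j, j ≠ l → ∀ u : Fin dh → ℝ, u ≠ 0 → ∀ α : Fin dh → ℝ,
        IsMinNormSol (D l) ((D j).mulVec u) α → vnorm α < vnorm u)
    (x : Fin m → ℝ) (c : Fin k → Fin dh → ℝ)
    (hx : x = ∑ j, (D j).mulVec (c j))
    (hcolspace : ∃ β : Fin dh → ℝ, (D l).mulVec β = x) :
    (∃ α : Fin dh → ℝ, (D l).mulVec α = x ∧ vnorm α ≤ ∑ j, vnorm (c j)) ∧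
    ((∃ j, j ≠ l ∧ c j ≠ 0) →
      ∃ α : Fin dh → ℝ, (D l).mulVec α = x ∧ vnorm α < ∑ j, vnorm (c j)) := by
  set T : Fin k → EuclideanSpace ℝ (Fin dh) →ₗ[ℝ] EuclideanSpace ℝ (Fin m) :=
    fun j => Matrix.toEuclideanLin (D j)
  have hT : ∀ j ≠ l, ∀ u ≠ 0, ∀ a, IsMinNormLeastSquaresSol (T l) (T j u) a → ‖a‖ < ‖u‖ := by
    intro j hj u hu a ha
    simpa [vnorm_eq_norm_toLp] using hD j hj u.ofLp (by simpa using hu) a.ofLp ha.isMinNormSol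
  have h_sum : ∑ j, T j (WithLp.toLp 2 (c j)) = WithLp.toLp 2 x := by
    simp [T, hx, WithLp.toLp_sum]
  obtain ⟨β, hβ⟩ := hcolspace
  obtain ⟨a, ha_eq, ha_le, ha_lt⟩ :=
    exists_apply_eq_norm_le_sum_norm T l hT (fun j => WithLp.toLp 2 (c j))
      (h_sum ▸ ⟨WithLp.toLp 2 β, by simp [T, hβ]⟩)
  have ha_eq' : D l *ᵥ a.ofLp = x := by
    simpa [T] using congrArg WithLp.ofLp (ha_eq.trans h_sum)
  have ha_norm : vnorm a.ofLp = ‖a‖ := vnorm_eq_norm_toLp a.ofLp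
  simp only [← vnorm_eq_norm_toLp, ← ha_norm] at ha_le ha_lt
  exact ⟨⟨a.ofLp, ha_eq', ha_le⟩, fun hc => ⟨a.ofLp, ha_eq', ha_lt (by simpa using hc)⟩⟩
end

section
/- Let U be a linear subspace of ℝ^m and x ∈ U. Let D = [D_1, D_2] ∈ ℝ^{m×d̂} with D_1 ∈ ℝ^{m×p} and 1 ≤ p ≤ d̂ − 1, where every column of D has Euclidean norm at most 1 and every column of D_1 lies in U. Let α = (α'; 0) ∈ ℝ^{d̂} with α' ∈ ℝ^p, D_1 α' = x, and α'_p ≠ 0. Let δ be the p-th column of D_1, define D̄ = [D_1, δ, δ, …, δ] ∈ ℝ^{m×d̂} (the last d̂ − p columns all equal to δ), and define ᾱ = (α'_1, …, α'_{p−1}, α'_p/(d̂−p+1), …, α'_p/(d̂−p+1)) ∈ ℝ^{d̂} (the last d̂ − p + 1 entries all equal to α'_p/(d̂−p+1)). Then every column of D̄ lies in U and has Euclidean norm at most 1, D̄ ᾱ = x, and ‖ᾱ‖ < ‖α‖. -/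
/-!
Splitting the index set at the last coefficient `α_p` of `α'`, both `D̄ ᾱ` and `‖ᾱ‖²` agree with
`D α` and `‖α‖²` on the first `p - 1` indices. On the remaining `k = d̂ - p + 1 ≥ 2` indices, `D α`
only sees `δ α_p`, which the `k` copies `δ · α_p / k` reproduce, while the squared norm drops
from `α_p²` to `k (α_p / k)² = α_p² / k`.
-/

open Matrix Finset

section Spreading

variable {ι : Type*} [Fintype ι] [DecidableEq ι] {S : Finset ι} {i₀ : ι}

lemma sum_eq_sum_add_of_compl_eq_single (f : ι → ℝ) (hi₀ : i₀ ∉ S)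
    (hf : ∀ j ∉ S, j ≠ i₀ → f j = 0) :
    ∑ j, f j = ∑ j ∈ S, f j + f i₀ := by
  rw [← sum_add_sum_compl S f,
    sum_eq_single_of_mem i₀ (mem_compl.2 hi₀) fun j hj => hf j (mem_compl.1 hj)]

lemma sum_compl_eq_of_eq_div_card (b : ι → ℝ) (c : ℝ) (hi₀ : i₀ ∉ S)
    (hb : ∀ j ∉ S, b j = c / #Sᶜ) :
    ∑ j ∈ Sᶜ, b j = c := by
  have hcard : (#Sᶜ : ℝ) ≠ 0 := by
    exact_mod_cast (card_pos.2 ⟨i₀, mem_compl.2 hi₀⟩).ne'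
  rw [sum_congr rfl fun j hj => hb j (mem_compl.1 hj), sum_const, nsmul_eq_mul]
  field_simp

variable {a b : ι → ℝ}

theorem sum_mul_spread_eq (f g : ι → ℝ) (hi₀ : i₀ ∉ S) (ha : ∀ j ∉ S, j ≠ i₀ → a j = 0)
    (hfS : ∀ j ∈ S, f j = g j) (hf : ∀ j ∉ S, f j = g i₀)
    (hbS : ∀ j ∈ S, b j = a j) (hb : ∀ j ∉ S, b j = a i₀ / #Sᶜ) :
    ∑ j, f j * b j = ∑ j, g j * a j := by
  rw [sum_eq_sum_add_of_compl_eq_single (fun j => g j * a j) hi₀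
      fun j hj hne => by rw [ha j hj hne, mul_zero],
    ← sum_add_sum_compl S,
    sum_compl_eq_of_eq_div_card (fun j => f j * b j) (g i₀ * a i₀) hi₀
      fun j hj => by rw [hf j hj, hb j hj, mul_div_assoc],
    sum_congr rfl fun j hj => by rw [hfS j hj, hbS j hj]]

theorem sum_sq_spread_lt (hi₀ : i₀ ∉ S) (ha : ∀ j ∉ S, j ≠ i₀ → a j = 0)
    (hbS : ∀ j ∈ S, b j = a j) (hb : ∀ j ∉ S, b j = a i₀ / #Sᶜ)
    (hai₀ : a i₀ ≠ 0) (hcard : 2 ≤ #Sᶜ) :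
    ∑ j, b j ^ 2 < ∑ j, a j ^ 2 := by
  have hk : (2 : ℝ) ≤ #Sᶜ := by exact_mod_cast hcard
  have hsq : 0 < a i₀ ^ 2 := by positivity
  rw [sum_eq_sum_add_of_compl_eq_single (fun j => a j ^ 2) hi₀
      fun j hj hne => by rw [ha j hj hne, zero_pow two_ne_zero],
    ← sum_add_sum_compl S,
    sum_compl_eq_of_eq_div_card (fun j => b j ^ 2) (a i₀ ^ 2 / #Sᶜ) hi₀
      fun j hj => by rw [hb j hj]; field_simp,
    sum_congr rfl fun j hj => by rw [hbS j hj]]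
  have : a i₀ ^ 2 / #Sᶜ < a i₀ ^ 2 := div_lt_self hsq (by linarith)
  linarith

end Spreading

theorem spreading_coefficient_decreases_norm_general
    (m dh p : ℕ)
    (U : Submodule ℝ (Fin m → ℝ)) (x : Fin m → ℝ)
    (D : Matrix (Fin m) (Fin dh) ℝ)
    (hpd : p ≤ dh - 1)
    (hDnorm : ∀ j, vnorm (fun i => D i j) ≤ 1)
    (hD1U : ∀ j : Fin dh, (j : ℕ) < p → (fun i => D i j) ∈ U)
    (α : Fin dh → ℝ)
    (hα0 : ∀ j : Fin dh, p ≤ (j : ℕ) → α j = 0)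
    (hDα : D.mulVec α = x)
    (pidx : Fin dh) (hpidx : (pidx : ℕ) = p - 1)
    (hαp : α pidx ≠ 0)
    (Dbar : Matrix (Fin m) (Fin dh) ℝ)
    (hDbar : ∀ i j, Dbar i j = if (j : ℕ) < p then D i j else D i pidx)
    (abar : Fin dh → ℝ)
    (habar : ∀ j : Fin dh,
        abar j = if (j : ℕ) < p - 1 then α j else α pidx / ((dh - p + 1 : ℕ) : ℝ)) :
    (∀ j, (fun i => Dbar i j) ∈ U ∧ vnorm (fun i => Dbar i j) ≤ 1) ∧
    Dbar.mulVec abar = x ∧ vnorm abar < vnorm α := by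
  have hpidx_lt : (pidx : ℕ) < p := by
    by_contra h
    exact hαp (hα0 pidx (by omega))
  have hmem : ∀ j, j ∈ Iio pidx ↔ (j : ℕ) < p - 1 := by
    simp [Fin.lt_def, hpidx]
  have hcard : #(Iio pidx)ᶜ = dh - p + 1 := by
    rw [card_compl, Fintype.card_fin, Fin.card_Iio]
    omega
  have hsupp : ∀ j ∉ Iio pidx, j ≠ pidx → α j = 0 := fun j hj hne =>
    hα0 j (by have := Fin.val_ne_of_ne hne; rw [hmem] at hj; omega)
  have hbS : ∀ j ∈ Iio pidx, abar j = α j := fun j hj => by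
    rw [habar, if_pos ((hmem j).1 hj)]
  have hb : ∀ j ∉ Iio pidx, abar j = α pidx / #(Iio pidx)ᶜ := fun j hj => by
    rw [habar, if_neg (mt (hmem j).2 hj), hcard]
  have hcol : ∀ j, (fun i => Dbar i j) = (fun i => D i (if (j : ℕ) < p then j else pidx)) :=
    fun j => funext fun i => by rw [hDbar]; split_ifs <;> rfl
  refine ⟨fun j => ?_, ?_, ?_⟩
  · rw [hcol]
    split_ifs with hj
    exacts [⟨hD1U j hj, hDnorm j⟩, ⟨hD1U pidx hpidx_lt, hDnorm pidx⟩]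
  · rw [← hDα]
    funext i
    refine sum_mul_spread_eq (Dbar i) (D i) (notMem_Iio_self) hsupp (fun j hj => ?_)
      (fun j hj => ?_) hbS hb
    · rw [hDbar, if_pos (by have := (hmem j).1 hj; omega)]
    · rw [hDbar]
      split_ifs with hjp
      · rw [Fin.ext (show (j : ℕ) = pidx by rw [hmem] at hj; omega)]
      · rfl
  · exact Real.sqrt_lt_sqrt (by positivity)
      (sum_sq_spread_lt notMem_Iio_self hsupp hbS hb hαp (by omega))

/-- Lemma 2 construction: replacing the columns of `D` outside `D_1` by copies of the
`p`-th column `δ` of `D_1`, and spreading the `p`-th coefficient over the repeated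
columns, keeps all columns in `U` with norm at most 1, reconstructs `x`, and strictly
decreases the Euclidean norm of the coefficient vector. -/
theorem spreading_coefficient_decreases_norm
    (m dh p : ℕ)
    (U : Submodule ℝ (Fin m → ℝ)) (x : Fin m → ℝ) (hx : x ∈ U)
    (D : Matrix (Fin m) (Fin dh) ℝ)
    (hp1 : 1 ≤ p) (hpd : p ≤ dh - 1)
    (hDnorm : ∀ j, vnorm (fun i => D i j) ≤ 1)
    (hD1U : ∀ j : Fin dh, (j : ℕ) < p → (fun i => D i j) ∈ U)
    (α : Fin dh → ℝ)
    (hα0 : ∀ j : Fin dh, p ≤ (j : ℕ) → α j = 0)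
    (hDα : D.mulVec α = x)
    (pidx : Fin dh) (hpidx : (pidx : ℕ) = p - 1)
    (hαp : α pidx ≠ 0)
    (Dbar : Matrix (Fin m) (Fin dh) ℝ)
    (hDbar : ∀ i j, Dbar i j = if (j : ℕ) < p then D i j else D i pidx)
    (abar : Fin dh → ℝ)
    (habar : ∀ j : Fin dh,
        abar j = if (j : ℕ) < p - 1 then α j else α pidx / ((dh - p + 1 : ℕ) : ℝ)) :
    (∀ j, (fun i => Dbar i j) ∈ U ∧ vnorm (fun i => Dbar i j) ≤ 1) ∧
    Dbar.mulVec abar = x ∧ vnorm abar < vnorm α :=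
  spreading_coefficient_decreases_norm_general m dh p U x D hpd hDnorm hD1U α hα0 hDα pidx hpidx hαp
    Dbar hDbar abar habar
end

section
/- Let (F_t)_{t≥0} be a real sequence bounded below, let (x_t)_{t≥1} and (b_t)_{t≥1} be nonnegative real sequences with x_0 = 0, let (α_t)_{t≥0} satisfy α_t ≥ τ̄ for some τ̄ > 0, and let 0 ≤ δ < 1. Suppose that for every t ≥ 1: F_{t−1} − F_t ≥ (α_t/2)·x_t − (δ²α_{t−1}/2)·x_{t−1} + b_t. Then Σ_{t≥1} x_t < ∞ and Σ_{t≥1} b_t < ∞; in particular x_t → 0, b_t → 0, and F_{t−1} − F_t → 0 as t → ∞. -/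
/-!
With `c t = α t / 2 * x t`, the function `G t = F t + δ² c t` is a Lyapunov function: the
recursion says exactly that `G t - G (t + 1) ≥ (1 - δ²) c (t + 1) + b (t + 1) ≥ 0`. Since `G`
is antitone and bounded below, its decrements are summable, hence so are `c`, `b` and
(as `α ≥ τ̄ > 0`) `x`. Finally `F t - F (t + 1)` differs from `G t - G (t + 1)` by
`δ² (c t - c (t + 1)) → 0`.
-/

open Filter Topology Finset

theorem summable_sub_succ_of_antitone_of_bddBelow {G : ℕ → ℝ} {M : ℝ}
    (hG : Antitone G) (hM : ∀ t, M ≤ G t) : Summable fun t => G t - G (t + 1) := by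
  refine summable_of_sum_range_le (c := G 0 - M) (fun t => sub_nonneg.2 (hG t.le_succ))
    fun n => ?_
  rw [sum_range_sub']
  linarith [hM n]

theorem summable_of_mul_succ_le {u v : ℕ → ℝ} {K : ℝ} (hK : 0 < K) (hu : ∀ t, 0 ≤ u t)
    (hv : Summable v) (h : ∀ t, K * u (t + 1) ≤ v t) : Summable u :=
  (summable_nat_add_iff 1).mp <|
    (hv.mul_left K⁻¹).of_nonneg_of_le (fun _ => hu _) fun t => (le_inv_mul_iff₀ hK).2 (h t)

theorem descent_sequence_summable_general
    (F x b α : ℕ → ℝ) (τbar δ : ℝ)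
    (hbdd : ∃ M : ℝ, ∀ t, M ≤ F t)
    (hx : ∀ t, 0 ≤ x t) (hb : ∀ t, 0 ≤ b t)
    (hτ : 0 < τbar) (hα : ∀ t, τbar ≤ α t)
    (hδ0 : 0 ≤ δ) (hδ1 : δ < 1)
    (hrec : ∀ t : ℕ, 1 ≤ t →
        F (t - 1) - F t ≥ α t / 2 * x t - δ ^ 2 * α (t - 1) / 2 * x (t - 1) + b t) :
    Summable x ∧ Summable b ∧
    Tendsto x atTop (𝓝 0) ∧ Tendsto b atTop (𝓝 0) ∧
    Tendsto (fun t => F t - F (t + 1)) atTop (𝓝 0) := by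
  obtain ⟨M, hM⟩ := hbdd
  set c : ℕ → ℝ := fun t => α t / 2 * x t with hc_def
  have hc : ∀ t, 0 ≤ c t := fun t => mul_nonneg (by linarith [hα t]) (hx t)
  have hδ : 0 < 1 - δ ^ 2 := by nlinarith
  set G : ℕ → ℝ := fun t => F t + δ ^ 2 * c t with hG_def
  have hstep : ∀ t, (1 - δ ^ 2) * c (t + 1) + b (t + 1) ≤ G t - G (t + 1) := by
    intro t
    have := hrec (t + 1) (by omega)
    simp only [Nat.add_sub_cancel] at this
    simp only [hG_def, hc_def]
    linarith
  have hcb : ∀ t, 0 ≤ (1 - δ ^ 2) * c (t + 1) := fun t => mul_nonneg hδ.le (hc _)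
  have hG_anti : Antitone G :=
    antitone_nat_of_succ_le fun t => by linarith [hstep t, hcb t, hb (t + 1)]
  have hdG : Summable fun t => G t - G (t + 1) :=
    summable_sub_succ_of_antitone_of_bddBelow (M := M) hG_anti
      fun t => by linarith [hM t, mul_nonneg (sq_nonneg δ) (hc t)]
  have hcs : Summable c :=
    summable_of_mul_succ_le hδ hc hdG fun t => by linarith [hstep t, hb (t + 1)]
  have hbs : Summable b :=
    summable_of_mul_succ_le one_pos hb hdG fun t => by linarith [hstep t, hcb t]
  have hxs : Summable x := (hcs.mul_left (2 / τbar)).of_nonneg_of_le hx fun t =>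
    calc x t = 2 / τbar * (τbar / 2 * x t) := by field_simp
      _ ≤ 2 / τbar * c t := by simp only [hc_def]; gcongr; exacts [hx t, hα t]
  refine ⟨hxs, hbs, hxs.tendsto_atTop_zero, hbs.tendsto_atTop_zero, ?_⟩
  have hc0 := hcs.tendsto_atTop_zero
  have hlim := hdG.tendsto_atTop_zero.sub
    ((hc0.sub (hc0.comp (tendsto_add_atTop_nat 1))).const_mul (δ ^ 2))
  simp only [hG_def, Function.comp_def, sub_zero, mul_zero] at hlim
  convert hlim using 2
  ring

/-- Abstract descent-sequence lemma: if `F` is bounded below and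
`F_{t−1} − F_t ≥ (α_t/2)x_t − (δ²α_{t−1}/2)x_{t−1} + b_t` with `x, b ≥ 0`, `x_0 = 0`,
`α_t ≥ τ̄ > 0` and `0 ≤ δ < 1`, then `Σ x_t < ∞`, `Σ b_t < ∞`, `x_t → 0`, `b_t → 0`,
and `F_{t−1} − F_t → 0`. -/
theorem descent_sequence_summable
    (F x b α : ℕ → ℝ) (τbar δ : ℝ)
    (hbdd : ∃ M : ℝ, ∀ t, M ≤ F t)
    (hx : ∀ t, 0 ≤ x t) (hb : ∀ t, 0 ≤ b t) (hx0 : x 0 = 0)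
    (hτ : 0 < τbar) (hα : ∀ t, τbar ≤ α t)
    (hδ0 : 0 ≤ δ) (hδ1 : δ < 1)
    (hrec : ∀ t : ℕ, 1 ≤ t →
        F (t - 1) - F t ≥ α t / 2 * x t - δ ^ 2 * α (t - 1) / 2 * x (t - 1) + b t) :
    Summable x ∧ Summable b ∧
    Tendsto x atTop (𝓝 0) ∧ Tendsto b atTop (𝓝 0) ∧
    Tendsto (fun t => F t - F (t + 1)) atTop (𝓝 0) :=
  descent_sequence_summable_general F x b α τbar δ hbdd hx hb hτ hα hδ0 hδ1 hrec
end

section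
/- Let H be a real inner product space, let U ⊆ H be a convex set, let g : H → ℝ be convex and differentiable with gradient ∇g, let h : H → ℝ be convex, and set f = g + h. Let v ∈ U, L > 0, and let u* be a minimizer over u ∈ U of the function u ↦ ⟨∇g(v), u − v⟩ + (L/2)‖u − v‖² + h(u). If g(u*) ≤ g(v) + ⟨∇g(v), u* − v⟩ + (L/2)‖u* − v‖², then for every u ∈ U: f(u) − f(u*) ≥ (L/2)‖u* − v‖² + L⟨v − u, u* − v⟩. -/
/-!
The prox-linear surrogate `φ u = ⟪∇g v, u - v⟫ + L/2 ‖u - v‖² + h u` is `L`-strongly convex, so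
its minimizer `u*` over `U` satisfies the quadratic growth `φ u* + L/2 ‖u - u*‖² ≤ φ u`.
Bounding `g u` from below by its tangent at `v` and `g u*` from above by the descent condition
gives `f u - f u* ≥ φ u - φ u* - L/2 ‖u - v‖²`, and expanding the squares around `u*` yields the
claim.
-/

open scoped RealInnerProductSpace
open Filter Set Topology

theorem ConvexOn.add_apply_sub_le_of_hasFDerivAt {E : Type*} [NormedAddCommGroup E]
    [NormedSpace ℝ E] {s : Set E} {f : E → ℝ} {f' : E →L[ℝ] ℝ} {x y : E}
    (hf : ConvexOn ℝ s f) (hx : x ∈ s) (hy : y ∈ s) (hf' : HasFDerivAt f f' x) :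
    f x + f' (y - x) ≤ f y := by
  have hline : ConvexOn ℝ (Icc (0 : ℝ) 1) (f ∘ AffineMap.lineMap x y) :=
    (hf.comp_affineMap _).subset (fun t ht => hf.1.lineMap_mem hx hy ht) (convex_Icc 0 1)
  have hderiv : HasDerivAt (f ∘ AffineMap.lineMap x y) (f' (y - x)) (0 : ℝ) := by
    have hf'0 : HasFDerivAt f f' (AffineMap.lineMap x y (0 : ℝ)) := by simpa using hf'
    exact hf'0.comp_hasDerivAt 0 AffineMap.hasDerivAt_lineMap
  have hslope := hline.le_slope_of_hasDerivAt (by simp) (by simp) zero_lt_one hderiv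
  rw [slope_def_field] at hslope
  simpa [map_sub, le_sub_iff_add_le'] using hslope

theorem UniformConvexOn.add_le_of_isMinOn {E : Type*} [NormedAddCommGroup E]
    [NormedSpace ℝ E] {s : Set E} {φ : ℝ → ℝ} {f : E → ℝ} {x y : E}
    (hf : UniformConvexOn s φ f) (hmin : IsMinOn f s x) (hx : x ∈ s) (hy : y ∈ s) :
    f x + φ ‖x - y‖ ≤ f y := by
  -- compare `f x` with the value at `a • x + (1 - a) • y`, then let `a → 1`
  have hseg : ∀ a ∈ Ioo (0 : ℝ) 1, a * φ ‖x - y‖ ≤ f y - f x := by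
    rintro a ⟨ha0, ha1⟩
    have hconv := hf.2 hx hy ha0.le (sub_pos.2 ha1).le (add_sub_cancel a 1)
    have hle : f x ≤ f (a • x + (1 - a) • y) :=
      isMinOn_iff.1 hmin _ (hf.1 hx hy ha0.le (sub_pos.2 ha1).le (add_sub_cancel a 1))
    have : 0 ≤ (1 - a) * (f y - f x - a * φ ‖x - y‖) := by
      simp only [smul_eq_mul] at hconv
      linarith
    linarith [(mul_nonneg_iff_of_pos_left (sub_pos.2 ha1)).1 this]
  have hlim : Tendsto (fun a : ℝ => a * φ ‖x - y‖) (𝓝[<] 1) (𝓝 (φ ‖x - y‖)) :=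
    ((continuous_mul_const _).tendsto' 1 _ (one_mul _)).mono_left nhdsWithin_le_nhds
  linarith [le_of_tendsto hlim (eventually_of_mem (Ioo_mem_nhdsLT zero_lt_one) hseg)]

theorem strongConvexOn_inner_sub_add_sq {E : Type*} [NormedAddCommGroup E]
    [InnerProductSpace ℝ E] {s : Set E} (hs : Convex ℝ s) (a v : E) (m : ℝ) :
    StrongConvexOn s m (fun x => ⟪a, x - v⟫ + m / 2 * ‖x - v‖ ^ 2) := by
  rw [strongConvexOn_iff_convex]
  have haff : (fun x => ⟪a, x - v⟫ + m / 2 * ‖x - v‖ ^ 2 - m / 2 * ‖x‖ ^ 2) =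
      fun x => innerSL ℝ (a - m • v) x + (m / 2 * ‖v‖ ^ 2 - ⟪a, v⟫) := by
    ext x
    simp only [innerSL_apply_apply, norm_sub_sq_real, inner_sub_left, inner_sub_right,
      real_inner_smul_left, real_inner_comm x v]
    ring
  rw [haff]
  exact ((innerSL ℝ (a - m • v)).toLinearMap.convexOn hs).add_const _

theorem prox_linear_minimizer_bound_general
    {H : Type*} [NormedAddCommGroup H] [InnerProductSpace ℝ H]
    (U : Set H) (hU : Convex ℝ U)
    (g h : H → ℝ)
    (hg : ConvexOn ℝ Set.univ g) (hh : ConvexOn ℝ Set.univ h)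
    (g' : H → H) (hg' : ∀ x : H, HasFDerivAt g (innerSL ℝ (g' x)) x)
    (v : H) (L : ℝ)
    (ustar : H) (hustar : ustar ∈ U)
    (hmin : ∀ u ∈ U,
        ⟪g' v, ustar - v⟫ + L / 2 * ‖ustar - v‖ ^ 2 + h ustar ≤
          ⟪g' v, u - v⟫ + L / 2 * ‖u - v‖ ^ 2 + h u)
    (hdesc : g ustar ≤ g v + ⟪g' v, ustar - v⟫ + L / 2 * ‖ustar - v‖ ^ 2) :
    ∀ u ∈ U,
      (g u + h u) - (g ustar + h ustar) ≥
        L / 2 * ‖ustar - v‖ ^ 2 + L * ⟪v - u, ustar - v⟫ := by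
  intro u hu
  have hstrong : StrongConvexOn U L (fun x => ⟪g' v, x - v⟫ + L / 2 * ‖x - v‖ ^ 2 + h x) := by
    simpa [StrongConvexOn, Pi.add_def] using
      (strongConvexOn_inner_sub_add_sq hU (g' v) v L).add
        (uniformConvexOn_zero.2 (hh.subset (subset_univ U) hU))
  have hgrowth := hstrong.add_le_of_isMinOn (isMinOn_iff.2 hmin) hustar hu
  have hgrad : g v + ⟪g' v, u - v⟫ ≤ g u := by
    simpa using hg.add_apply_sub_le_of_hasFDerivAt (mem_univ v) (mem_univ u) (hg' v)
  have hnorm : ‖u - v‖ ^ 2 = ‖ustar - v‖ ^ 2 - 2 * ⟪ustar - v, ustar - u⟫ + ‖ustar - u‖ ^ 2 := by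
    rw [← norm_sub_sq_real, sub_sub_sub_cancel_left]
  have hinner : ⟪v - u, ustar - v⟫ = ⟪ustar - v, ustar - u⟫ - ‖ustar - v‖ ^ 2 := by
    rw [← real_inner_self_eq_norm_sq, ← inner_sub_right, sub_sub_sub_cancel_left, real_inner_comm]
  rw [hnorm] at hgrowth
  rw [hinner]
  linarith

/-- Lemma 2.1 of Xu–Yin: for `f = g + h` with `g` convex differentiable and `h` convex,
if `u*` minimizes the prox-linear surrogate at `v` over the convex set `U` and the
descent condition holds at `u*`, then for every `u ∈ U`,
`f(u) − f(u*) ≥ (L/2)‖u* − v‖² + L⟨v − u, u* − v⟩`. -/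
theorem prox_linear_minimizer_bound
    {H : Type*} [NormedAddCommGroup H] [InnerProductSpace ℝ H]
    (U : Set H) (hU : Convex ℝ U)
    (g h : H → ℝ)
    (hg : ConvexOn ℝ Set.univ g) (hh : ConvexOn ℝ Set.univ h)
    (g' : H → H) (hg' : ∀ x : H, HasFDerivAt g (innerSL ℝ (g' x)) x)
    (v : H) (hv : v ∈ U) (L : ℝ) (hL : 0 < L)
    (ustar : H) (hustar : ustar ∈ U)
    (hmin : ∀ u ∈ U,
        ⟪g' v, ustar - v⟫ + L / 2 * ‖ustar - v‖ ^ 2 + h ustar ≤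
          ⟪g' v, u - v⟫ + L / 2 * ‖u - v‖ ^ 2 + h u)
    (hdesc : g ustar ≤ g v + ⟪g' v, ustar - v⟫ + L / 2 * ‖ustar - v‖ ^ 2) :
    ∀ u ∈ U,
      (g u + h u) - (g ustar + h ustar) ≥
        L / 2 * ‖ustar - v‖ ^ 2 + L * ⟪v - u, ustar - v⟫ :=
  prox_linear_minimizer_bound_general U hU g h hg hh g' hg' v L ustar hustar hmin hdesc
end
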